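/- arXiv:1212.1881 — 2 statements merged into one kernel-verified Lean document; each statement's English description precedes it below -/
import Mathlib

section
/- For a Boolean-valued relation M over an attribute (item) set S and threshold z, the family of minimal infrequent itemsets equals the set of minimal transversals of the complements of the maximal frequent itemsets: IS⁻(M,z) = tr( {S \ A : A ∈ IS⁺(M,z)} ). -/
/-- A transversal of hypergraph `H` is a set meeting every hyperedge. -/
def IsTransversal {α : Type*} (H : Set (Finset α)) (T : Finset α) : Prop :=
  ∀ E ∈ H, ∃ v ∈ T, v ∈ E

/-- A minimal transversal is a transversal no proper subset of which is a transversal. -/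
def IsMinimalTransversal {α : Type*} (H : Set (Finset α)) (T : Finset α) : Prop :=
  IsTransversal H T ∧ ∀ T' ⊂ T, ¬ IsTransversal H T'

/-- `tr H` is the set of all minimal transversals of `H`. -/
def tr {α : Type*} (H : Set (Finset α)) : Set (Finset α) :=
  {T | IsMinimalTransversal H T}

/-- A hypergraph is simple if no hyperedge is contained in another one. -/
def Simple {α : Type*} (H : Set (Finset α)) : Prop :=
  ∀ E₁ ∈ H, ∀ E₂ ∈ H, E₁ ⊆ E₂ → E₁ = E₂

/-- The frequency of an itemset `U` in the relation `M`: the number of tuples `t`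
with `U ⊆ items(t)`. -/
noncomputable def freq {α : Type*} (M : Multiset (α → Bool)) (U : Finset α) : ℕ :=
  Multiset.card (M.filter (fun t => ∀ a ∈ U, t a = true))

/-- `U` is frequent if its frequency exceeds the threshold `z`. -/
def Frequent {α : Type*} (M : Multiset (α → Bool)) (z : ℕ) (U : Finset α) : Prop :=
  z < freq M U

/-- The maximal (under inclusion) frequent itemsets `IS⁺(M,z)`. -/
def MaxFrequent {α : Type*} [Fintype α] (M : Multiset (α → Bool)) (z : ℕ) :
    Set (Finset α) :=
  {U | Frequent M z U ∧ ∀ W : Finset α, Frequent M z W → U ⊆ W → U = W}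

/-- The minimal (under inclusion) infrequent itemsets `IS⁻(M,z)`. -/
def MinInfrequent {α : Type*} [Fintype α] (M : Multiset (α → Bool)) (z : ℕ) :
    Set (Finset α) :=
  {U | ¬ Frequent M z U ∧ ∀ W : Finset α, W ⊂ U → Frequent M z W}

/-!
An itemset is infrequent exactly when it lies in no maximal frequent itemset (frequency is
antitone and there are only finitely many itemsets), i.e. when it meets the complement of
every maximal frequent itemset. So the infrequent itemsets are precisely the transversals of
the complements, and taking minimal elements on both sides gives the theorem.
-/

lemma forall_maximal_not_le_iff {β : Type*} [Preorder β] [Finite β] {P : β → Prop}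
    (hP : Antitone P) {a : β} : (∀ b, Maximal P b → ¬ a ≤ b) ↔ ¬ P a := by
  refine ⟨fun h ha => ?_, fun ha b hb hab => ha (hP hab hb.prop)⟩
  obtain ⟨b, hab, hb⟩ := Finite.exists_le_maximal ha
  exact h b hb hab

section Transversal

variable {α : Type*}

lemma tr_eq_setOf_minimal (H : Set (Finset α)) : tr H = {T | Minimal (IsTransversal H) T} := by
  ext T
  exact minimal_iff_forall_lt.symm

lemma isTransversal_image_compl_iff [Fintype α] [DecidableEq α] (F : Set (Finset α))
    (T : Finset α) : IsTransversal ((Finset.univ \ ·) '' F) T ↔ ∀ A ∈ F, ¬ T ⊆ A := by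
  simp [IsTransversal, Finset.not_subset]

end Transversal

section Frequency

variable {α : Type*} (M : Multiset (α → Bool)) (z : ℕ)

lemma freq_anti : Antitone (freq M) := fun _ _ hUW =>
  Multiset.card_le_card <| Multiset.monotone_filter_right _ fun _ ht a ha => ht a (hUW ha)

lemma frequent_anti : Antitone (Frequent M z) := fun _ _ hUW hW =>
  hW.trans_le (freq_anti M hUW)

variable [Fintype α]

lemma maxFrequent_eq_setOf_maximal : MaxFrequent M z = {U | Maximal (Frequent M z) U} := by
  ext U
  exact maximal_iff.symm

lemma minInfrequent_eq_setOf_minimal :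
    MinInfrequent M z = {U | Minimal (fun U => ¬ Frequent M z U) U} := by
  ext U
  simp only [MinInfrequent, Set.mem_ofPred_eq, minimal_iff_forall_lt, not_not]

end Frequency

theorem min_infrequent_eq_tr_complements_general {α : Type*} [Fintype α] [DecidableEq α]
    (M : Multiset (α → Bool)) (z : ℕ) :
    MinInfrequent M z = tr ((fun A => Finset.univ \ A) '' MaxFrequent M z) := by
  have isTransversal_eq_infrequent :
      IsTransversal ((fun A => Finset.univ \ A) '' MaxFrequent M z) = (¬ Frequent M z ·) := by
    funext T
    rw [isTransversal_image_compl_iff, maxFrequent_eq_setOf_maximal]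
    exact propext (forall_maximal_not_le_iff (frequent_anti M z))
  rw [tr_eq_setOf_minimal, isTransversal_eq_infrequent, minInfrequent_eq_setOf_minimal]

theorem min_infrequent_eq_tr_complements {α : Type*} [Fintype α] [DecidableEq α]
    (M : Multiset (α → Bool)) (z : ℕ) (hz : 0 < z) (hzM : z ≤ Multiset.card M) :
    MinInfrequent M z = tr ((fun A => Finset.univ \ A) '' MaxFrequent M z) :=
  min_infrequent_eq_tr_complements_general M z
end

section
/- Given M, z, and families G ⊆ IS⁻(M,z) and H ⊆ IS⁺(M,z), there is no maximal frequent itemset outside H and no minimal infrequent itemset outside G if and only if G = tr({S \ A : A ∈ H}). -/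
/-!
Frequency is antitone, so a set `T` is infrequent iff it lies in no maximal frequent set, i.e. iff
it meets the complement of every maximal frequent set. Hence `IS⁻ = tr {S \ A : A ∈ IS⁺}`.
Conversely, if `G = tr {S \ A : A ∈ H}` consists of infrequent sets, a maximal frequent set `B`
missing from `H` lies in no member of `H`, so it is a transversal of the complements and contains
some `T ∈ G`; then `T ⊆ B` is frequent, a contradiction. So `H = IS⁺`, and then `G = IS⁻`.
-/

section Itemsets

open Finset

variable {α : Type*}

section Transversal

theorem mem_tr_iff_minimal {H : Set (Finset α)} {T : Finset α} :
    T ∈ tr H ↔ Minimal (IsTransversal H) T :=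
  minimal_iff_forall_lt.symm

theorem IsTransversal.exists_mem_tr_subset {H : Set (Finset α)} {B : Finset α}
    (hB : IsTransversal H B) : ∃ T ⊆ B, T ∈ tr H := by
  obtain ⟨T, hTB, hT⟩ := exists_minimal_le_of_wellFoundedLT _ B hB
  exact ⟨T, hTB, mem_tr_iff_minimal.2 hT⟩

theorem isTransversal_univ_sdiff_image_iff [Fintype α] [DecidableEq α]
    {H : Set (Finset α)} {T : Finset α} :
    IsTransversal ((fun A => univ \ A) '' H) T ↔ ∀ A ∈ H, ¬ T ⊆ A := by
  simp [IsTransversal, Finset.not_subset]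

end Transversal

section Frequency

variable {M : Multiset (α → Bool)} {z : ℕ}

theorem Frequent.anti {U W : Finset α} (hUW : U ⊆ W) (hW : Frequent M z W) :
    Frequent M z U :=
  hW.trans_le <| Multiset.card_le_card <|
    Multiset.monotone_filter_right _ fun _ ht a ha => ht a (hUW ha)

variable [Fintype α]

theorem mem_maxFrequent_iff {U : Finset α} :
    U ∈ MaxFrequent M z ↔ Maximal (Frequent M z) U := by
  refine and_congr_right fun _ => forall₂_congr fun W _ => ?_
  exact ⟨fun h hUW => (h hUW).ge, fun h hUW => hUW.antisymm (h hUW)⟩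

theorem mem_minInfrequent_iff {U : Finset α} :
    U ∈ MinInfrequent M z ↔ Minimal (¬ Frequent M z ·) U := by
  simp only [minimal_iff_forall_lt, not_not]
  rfl

theorem Frequent.exists_mem_maxFrequent_superset {U : Finset α} (hU : Frequent M z U) :
    ∃ B ∈ MaxFrequent M z, U ⊆ B := by
  obtain ⟨B, hUB, hB⟩ := exists_maximal_ge_of_wellFoundedGT _ U hU
  exact ⟨B, mem_maxFrequent_iff.2 hB, hUB⟩

variable [DecidableEq α]

theorem isTransversal_univ_sdiff_maxFrequent_iff {T : Finset α} :
    IsTransversal ((fun A => univ \ A) '' MaxFrequent M z) T ↔ ¬ Frequent M z T := by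
  rw [isTransversal_univ_sdiff_image_iff]
  refine ⟨fun h hT => ?_, fun h A hA hTA => h (hA.1.anti hTA)⟩
  obtain ⟨B, hB, hTB⟩ := hT.exists_mem_maxFrequent_superset
  exact h B hB hTB

theorem minInfrequent_eq_tr :
    MinInfrequent M z = tr ((fun A => univ \ A) '' MaxFrequent M z) := by
  have hpred : IsTransversal ((fun A => univ \ A) '' MaxFrequent M z) = (¬ Frequent M z ·) :=
    funext fun _ => propext isTransversal_univ_sdiff_maxFrequent_iff
  ext T
  rw [mem_minInfrequent_iff, mem_tr_iff_minimal, hpred]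

theorem maxFrequent_eq_of_tr_subset {H : Set (Finset α)} (hH : H ⊆ MaxFrequent M z)
    (htr : tr ((fun A => univ \ A) '' H) ⊆ MinInfrequent M z) : MaxFrequent M z = H := by
  refine hH.antisymm' fun B hB => ?_
  by_contra hBH
  have hBtr : IsTransversal ((fun A => univ \ A) '' H) B :=
    isTransversal_univ_sdiff_image_iff.2 fun A hA hBA => hBH (hB.2 A (hH hA).1 hBA ▸ hA)
  obtain ⟨T, hTB, hT⟩ := hBtr.exists_mem_tr_subset
  exact (htr hT).1 (hB.1.anti hTB)

end Frequency

end Itemsets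

theorem maxfreq_mininfreq_identification_general {α : Type*} [Fintype α] [DecidableEq α]
    (M : Multiset (α → Bool)) (z : ℕ)
    (G H : Set (Finset α))
    (hG : G ⊆ MinInfrequent M z) (hH : H ⊆ MaxFrequent M z) :
    (MaxFrequent M z = H ∧ MinInfrequent M z = G) ↔
      G = tr ((fun A => Finset.univ \ A) '' H) := by
  constructor
  · rintro ⟨rfl, rfl⟩
    exact minInfrequent_eq_tr
  · intro hGtr
    have hMax : MaxFrequent M z = H := maxFrequent_eq_of_tr_subset hH (hGtr ▸ hG)
    exact ⟨hMax, by rw [hGtr, ← hMax, minInfrequent_eq_tr]⟩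

theorem maxfreq_mininfreq_identification {α : Type*} [Fintype α] [DecidableEq α]
    (M : Multiset (α → Bool)) (z : ℕ) (hz : 0 < z) (hzM : z ≤ Multiset.card M)
    (G H : Set (Finset α))
    (hG : G ⊆ MinInfrequent M z) (hH : H ⊆ MaxFrequent M z) :
    (MaxFrequent M z = H ∧ MinInfrequent M z = G) ↔
      G = tr ((fun A => Finset.univ \ A) '' H) :=
  maxfreq_mininfreq_identification_general M z G H hG hH
end
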